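/- In the MergeSort recursion tree T_n with n ≥ 2 and depth h = ⌈log₂ n⌉: level h - 1 contains exactly 2^h - n leaves (labeled 1) and exactly n - 2^{h-1} internal nodes (labeled 2), and level h contains exactly 2n - 2^h nodes, all leaves labeled 1. -/

import Mathlib

/-! As long as `2 ^ k ≤ n`, level `k` of `T_n` has `2 ^ k` nodes whose labels sum to `n`, and
every label `m` there satisfies `|m * 2 ^ k - n| < 2 ^ k`; all three facts pass from `⌊n/2⌋` and
`⌈n/2⌉` to `n`. At `k = h - 1` we have `2 ^ (h-1) < n ≤ 2 ^ h`, which forces every label to be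
`1` or `2`. If `a` nodes there are leaves and `b` are labelled `2`, then `a + b = 2 ^ (h-1)` and
`a + 2 b = n`, and level `h` consists of the `2 b` children of the latter, all leaves labelled `1`.
-/

inductive LTree where
  | leaf : ℕ → LTree
  | node : ℕ → LTree → LTree → LTree

def buildT (m : ℕ) : LTree :=
  if m ≤ 1 then .leaf m
  else .node m (buildT (m / 2)) (buildT ((m + 1) / 2))
decreasing_by all_goals omega

/-- The subtrees rooted at the nodes at distance `k` from the root. -/
def subtreesAt : LTree → ℕ → List LTree
  | t, 0 => [t]
  | .leaf _, _ + 1 => []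
  | .node _ l r, k + 1 => subtreesAt l k ++ subtreesAt r k

def isLeaf : LTree → Bool
  | .leaf _ => true
  | .node _ _ _ => false

def label : LTree → ℕ
  | .leaf m => m
  | .node m _ _ => m

lemma label_buildT (m : ℕ) : label (buildT m) = m := by
  rw [buildT]; split <;> rfl

lemma buildT_of_two_le {n : ℕ} (hn : 2 ≤ n) :
    buildT n = .node n (buildT (n / 2)) (buildT ((n + 1) / 2)) := by
  rw [buildT, if_neg (by omega)]

lemma subtreesAt_succ (t : LTree) (k : ℕ) :
    subtreesAt t (k + 1) = (subtreesAt t k).flatMap (subtreesAt · 1) := by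
  induction t generalizing k with
  | leaf m => cases k <;> simp [subtreesAt]
  | node m l r ihl ihr => cases k <;> simp [subtreesAt, ihl, ihr]

lemma subtreesAt_buildT_succ {n : ℕ} (hn : 2 ≤ n) (k : ℕ) :
    subtreesAt (buildT n) (k + 1) =
      subtreesAt (buildT (n / 2)) k ++ subtreesAt (buildT ((n + 1) / 2)) k := by
  rw [buildT_of_two_le hn, subtreesAt]

lemma length_subtreesAt_buildT {n k : ℕ} (hk : 2 ^ k ≤ n) :
    (subtreesAt (buildT n) k).length = 2 ^ k := by
  induction k generalizing n with
  | zero => simp [subtreesAt]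
  | succ k ih =>
    have := Nat.two_pow_pos k
    rw [pow_succ] at hk
    rw [subtreesAt_buildT_succ (by omega), List.length_append, ih (by omega), ih (by omega),
      pow_succ, mul_two]

lemma sum_label_subtreesAt_buildT {n k : ℕ} (hk : 2 ^ k ≤ n) :
    ((subtreesAt (buildT n) k).map label).sum = n := by
  induction k generalizing n with
  | zero => simp [subtreesAt, label_buildT]
  | succ k ih =>
    have := Nat.two_pow_pos k
    rw [pow_succ] at hk
    rw [subtreesAt_buildT_succ (by omega), List.map_append, List.sum_append, ih (by omega),
      ih (by omega)]
    omega

lemma near_mul_two_of_near_half {n a m E : ℕ} (ha : a = n / 2 ∨ a = (n + 1) / 2)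
    (hlo : m * E < a + E) (hhi : a < (m + 1) * E) :
    m * (E * 2) < n + E * 2 ∧ n < (m + 1) * (E * 2) := by
  rw [← mul_assoc, ← mul_assoc, add_one_mul] at *
  omega

lemma exists_buildT_of_mem_subtreesAt {n k : ℕ} (hk : 2 ^ k ≤ n) {t : LTree}
    (ht : t ∈ subtreesAt (buildT n) k) :
    ∃ m, t = buildT m ∧ m * 2 ^ k < n + 2 ^ k ∧ n < (m + 1) * 2 ^ k := by
  induction k generalizing n with
  | zero =>
    simp only [subtreesAt, List.mem_singleton] at ht
    exact ⟨n, ht, by omega, by omega⟩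
  | succ k ih =>
    have := Nat.two_pow_pos k
    rw [pow_succ] at hk ⊢
    rw [subtreesAt_buildT_succ (by omega), List.mem_append] at ht
    rcases ht with ht | ht
    · obtain ⟨m, rfl, hlo, hhi⟩ := ih (by omega) ht
      exact ⟨m, rfl, near_mul_two_of_near_half (.inl rfl) hlo hhi⟩
    · obtain ⟨m, rfl, hlo, hhi⟩ := ih (by omega) ht
      exact ⟨m, rfl, near_mul_two_of_near_half (.inr rfl) hlo hhi⟩

lemma mem_subtreesAt_pred_clog {n : ℕ} (hn : 2 ≤ n) {t : LTree}
    (ht : t ∈ subtreesAt (buildT n) (Nat.clog 2 n - 1)) :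
    t = .leaf 1 ∨ t = .node 2 (.leaf 1) (.leaf 1) := by
  set k := Nat.clog 2 n - 1
  have hlo : 2 ^ k < n := Nat.pow_pred_clog_lt_self one_lt_two hn
  have hhi : n ≤ 2 ^ k * 2 := by
    rw [← pow_succ, Nat.sub_add_cancel (Nat.clog_pos one_lt_two hn)]
    exact Nat.le_pow_clog one_lt_two n
  obtain ⟨m, rfl, hm_lo, hm_hi⟩ := exists_buildT_of_mem_subtreesAt hlo.le ht
  have hm3 : m < 3 := Nat.lt_of_mul_lt_mul_right (a := 2 ^ k) (by omega)
  have hm1 : 1 < m + 1 := Nat.lt_of_mul_lt_mul_right (a := 2 ^ k) (by omega)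
  obtain rfl | rfl : m = 1 ∨ m = 2 := by omega
  all_goals simp [buildT]

section LastLevels

variable {L : List LTree} (hL : ∀ t ∈ L, t = .leaf 1 ∨ t = .node 2 (.leaf 1) (.leaf 1))
include hL

lemma sum_map_label_eq :
    (L.map label).sum =
      (L.filter (fun t => isLeaf t)).length + 2 * (L.filter (fun t => ¬ isLeaf t)).length := by
  induction L with
  | nil => rfl
  | cons t L ih =>
    have := ih fun s hs => hL s (List.mem_cons_of_mem t hs)
    rcases hL t List.mem_cons_self with rfl | rfl <;>
      simp [isLeaf.eq_1, isLeaf.eq_2, label] at this ⊢ <;> omega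

lemma length_flatMap_subtreesAt_one :
    (L.flatMap (subtreesAt · 1)).length = 2 * (L.filter (fun t => ¬ isLeaf t)).length := by
  induction L with
  | nil => rfl
  | cons t L ih =>
    have := ih fun s hs => hL s (List.mem_cons_of_mem t hs)
    rcases hL t List.mem_cons_self with rfl | rfl <;>
      simp [isLeaf.eq_1, isLeaf.eq_2, subtreesAt] at this ⊢ <;> omega

lemma eq_leaf_one_of_mem_flatMap_subtreesAt_one {t : LTree}
    (ht : t ∈ L.flatMap (subtreesAt · 1)) : t = .leaf 1 := by
  obtain ⟨s, hs, ht⟩ := List.mem_flatMap.mp ht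
  rcases hL s hs with rfl | rfl <;> simp_all [subtreesAt]

lemma label_eq_one_of_mem_filter_isLeaf {t : LTree}
    (ht : t ∈ L.filter (fun t => isLeaf t)) : label t = 1 := by
  rw [List.mem_filter] at ht
  rcases hL t ht.1 with rfl | rfl <;> simp_all [isLeaf, label]

lemma label_eq_two_of_mem_filter_not_isLeaf {t : LTree}
    (ht : t ∈ L.filter (fun t => ¬ isLeaf t)) : label t = 2 := by
  rw [List.mem_filter] at ht
  rcases hL t ht.1 with rfl | rfl <;> simp_all [isLeaf, label]

end LastLevels

theorem last_two_levels (n : ℕ) (hn : 2 ≤ n) :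
    let h := Nat.clog 2 n
    (((subtreesAt (buildT n) (h - 1)).filter (fun t => isLeaf t)).length
        = 2 ^ h - n) ∧
    (∀ t ∈ (subtreesAt (buildT n) (h - 1)).filter (fun t => isLeaf t),
        label t = 1) ∧
    (((subtreesAt (buildT n) (h - 1)).filter (fun t => ¬ isLeaf t)).length
        = n - 2 ^ (h - 1)) ∧
    (∀ t ∈ (subtreesAt (buildT n) (h - 1)).filter (fun t => ¬ isLeaf t),
        label t = 2) ∧
    ((subtreesAt (buildT n) h).length = 2 * n - 2 ^ h) ∧
    (∀ t ∈ subtreesAt (buildT n) h, isLeaf t = true ∧ label t = 1) := by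
  intro h
  have hpos : 0 < h := Nat.clog_pos one_lt_two hn
  have hpow : 2 ^ h = 2 * 2 ^ (h - 1) := by rw [← pow_succ', Nat.sub_add_cancel hpos]
  set L := subtreesAt (buildT n) (h - 1) with hL_def
  have hlo : 2 ^ (h - 1) ≤ n := (Nat.pow_pred_clog_lt_self one_lt_two hn).le
  have hL := fun t (ht : t ∈ L) => mem_subtreesAt_pred_clog hn ht
  have hlen : L.length = 2 ^ (h - 1) := length_subtreesAt_buildT hlo
  have hsum : (L.map label).sum = n := sum_label_subtreesAt_buildT hlo
  have hsplit : L.length =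
      (L.filter (fun t => isLeaf t)).length + (L.filter (fun t => ¬ isLeaf t)).length := by
    simpa using L.length_eq_length_filter_add isLeaf
  have hnext : subtreesAt (buildT n) h = L.flatMap (subtreesAt · 1) := by
    rw [hL_def, ← subtreesAt_succ, Nat.sub_add_cancel hpos]
  rw [sum_map_label_eq hL] at hsum
  refine ⟨by omega, fun t => label_eq_one_of_mem_filter_isLeaf hL, by omega,
    fun t => label_eq_two_of_mem_filter_not_isLeaf hL, ?_, fun t ht => ?_⟩
  · rw [hnext, length_flatMap_subtreesAt_one hL]
    omega
  · rw [hnext] at ht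
    rw [eq_leaf_one_of_mem_flatMap_subtreesAt_one hL ht]
    exact ⟨rfl, rfl⟩
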